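/- Let G be a finite directed multigraph with e edges and v vertices such that every strongly connected component has at least 2 vertices and no strongly connected component consists only of vertices of outdegree 1. Then repeatedly contracting an outdegree-1 vertex (removing one vertex and one edge each time) terminates in a graph G' with e' edges and v' vertices satisfying e' ≥ 2v' and e' − v' = e − v; consequently e' ≤ 2(e − v). -/

import Mathlib

/-- A finite directed multigraph. -/
structure MG where
  V : Type
  E : Type
  [fV : Fintype V]
  [fE : Fintype E]
  src : E → V
  tgt : E → V

attribute [instance] MG.fV MG.fE

/-- Reachability by a directed path (length 0 allowed). -/
def MG.Reach (G : MG) : G.V → G.V → Prop :=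
  Relation.ReflTransGen (fun a b => ∃ e, G.src e = a ∧ G.tgt e = b)

/-- The outdegree of a vertex. -/
noncomputable def MG.outdeg (G : MG) (u : G.V) : ℕ :=
  Set.ncard {e : G.E | G.src e = u}

/-- `G'` is obtained from `G` by contracting an outdegree-1 vertex `u`:
the unique edge `e₀` leaving `u` (going to `v0 ≠ u`) is deleted, every edge
ending at `u` is redirected to end at `v0`, and `u` is deleted.  This removes
exactly one vertex and one edge. -/
def IsContraction (G G' : MG) : Prop :=
  ∃ (u v0 : G.V) (e₀ : G.E), v0 ≠ u ∧ G.src e₀ = u ∧ G.tgt e₀ = v0 ∧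
    (∀ e, G.src e = u → e = e₀) ∧
    ∃ (eV : G'.V ≃ {w : G.V // w ≠ u}) (eE : G'.E ≃ {e : G.E // e ≠ e₀}),
      (∀ e', (eV (G'.src e')).val = G.src (eE e').val) ∧
      (∀ e', (G.tgt (eE e').val = u ∧ (eV (G'.tgt e')).val = v0) ∨
             (G.tgt (eE e').val ≠ u ∧ (eV (G'.tgt e')).val = G.tgt (eE e').val))

/-!
Contracting an outdegree-1 vertex removes one vertex and one edge, so `e - v` is invariant.
Contraction keeps the outdegrees of the surviving vertices and maps directed paths to directed
paths, so it preserves "no sink" (true initially because every strongly connected component is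
nontrivial) and "every strongly connected component contains a vertex of outdegree `≠ 1`"; the
latter forbids the edge leaving an outdegree-1 vertex from being a self-loop. So contractions
can be performed until every vertex has outdegree `≥ 2`, where `e ≥ 2v`, and then
`e = 2 (e - v) - (e - 2v) ≤ 2 (e - v)`.
-/

open Relation

lemma Relation.ReflTransGen.exists_seq {α : Type*} {r : α → α → Prop} {a b : α}
    (h : ReflTransGen r a b) :
    ∃ (n : ℕ) (f : ℕ → α), f 0 = a ∧ (∀ i < n, r (f i) (f (i + 1))) ∧ f n = b := by
  induction h with
  | refl => exact ⟨0, fun _ => a, rfl, fun i hi => absurd hi (Nat.not_lt_zero i), rfl⟩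
  | @tail c d _ hcd ih =>
    obtain ⟨n, f, hf0, hf, hfn⟩ := ih
    refine ⟨n + 1, fun i => if i = n + 1 then d else f i, by simpa using hf0, fun i hi => ?_,
      by simp⟩
    rcases Nat.lt_succ_iff_lt_or_eq.mp hi with hi | rfl
    · simpa [hi.ne, (Nat.lt_succ_of_lt hi).ne] using hf i hi
    · simpa [hfn] using hcd

lemma Fintype.card_subtype_ne_add_one {α : Type*} [Fintype α] [DecidableEq α] (u : α) :
    Fintype.card {w // w ≠ u} + 1 = Fintype.card α := by
  have hpos := Fintype.card_pos_iff.mpr ⟨u⟩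
  rw [Fintype.card_subtype_compl (· = u), Fintype.card_subtype_eq]
  omega

namespace MG

variable (G : MG)

lemma card_E_eq_sum_outdeg : Fintype.card G.E = ∑ w : G.V, G.outdeg w := by
  classical
  rw [Fintype.card_congr (Equiv.sigmaFiberEquiv G.src).symm, Fintype.card_sigma]
  refine Finset.sum_congr rfl fun w _ => ?_
  rw [outdeg, ← Nat.card_coe_set_eq, Nat.card_eq_fintype_card]
  rfl

lemma two_mul_card_V_le_card_E (h : ∀ w, 2 ≤ G.outdeg w) :
    2 * Fintype.card G.V ≤ Fintype.card G.E := by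
  rw [card_E_eq_sum_outdeg, mul_comm, ← smul_eq_mul, ← Finset.card_univ, ← Finset.sum_const]
  exact Finset.sum_le_sum fun w _ => h w

lemma one_le_outdeg_of_reach {w x : G.V} (hwx : G.Reach w x) (hne : x ≠ w) :
    1 ≤ G.outdeg w := by
  obtain h | ⟨_, ⟨e, he, -⟩, -⟩ := ReflTransGen.cases_head hwx
  · exact absurd h.symm hne
  · exact (Set.ncard_pos (Set.toFinite _)).mpr ⟨e, he⟩

lemma outdeg_eq_one_iff {u : G.V} :
    G.outdeg u = 1 ↔ ∃ e₀, G.src e₀ = u ∧ ∀ e, G.src e = u → e = e₀ := by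
  simp only [outdeg, Set.ncard_eq_one, Set.eq_singleton_iff_unique_mem, Set.mem_ofPred_eq]

lemma reach_eq_of_unique_loop {e₀ : G.E} (huniq : ∀ e, G.src e = G.src e₀ → e = e₀)
    (hloop : G.tgt e₀ = G.src e₀) {x : G.V} (hx : G.Reach (G.src e₀) x) : x = G.src e₀ := by
  induction hx with
  | refl => rfl
  | tail _ hstep ih =>
    obtain ⟨e, rfl, rfl⟩ := hstep
    rw [huniq e ih, hloop]

def NoSccOfOutdegOne : Prop :=
  ∀ w, ∃ w', G.Reach w w' ∧ G.Reach w' w ∧ G.outdeg w' ≠ 1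

end MG

lemma IsContraction.card_V_add_one {G H : MG} (h : IsContraction G H) :
    Fintype.card H.V + 1 = Fintype.card G.V := by
  classical
  obtain ⟨u, -, -, -, -, -, -, eV, -⟩ := h
  rw [Fintype.card_congr eV, Fintype.card_subtype_ne_add_one]

lemma IsContraction.card_E_add_one {G H : MG} (h : IsContraction G H) :
    Fintype.card H.E + 1 = Fintype.card G.E := by
  classical
  obtain ⟨-, -, e₀, -, -, -, -, -, eE, -⟩ := h
  rw [Fintype.card_congr eE, Fintype.card_subtype_ne_add_one]

lemma card_E_sub_card_V_of_reflTransGen {G H : MG} (h : ReflTransGen IsContraction G H) :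
    Fintype.card H.E - Fintype.card H.V = Fintype.card G.E - Fintype.card G.V := by
  induction h with
  | refl => rfl
  | tail _ hstep ih =>
    have := hstep.card_V_add_one
    have := hstep.card_E_add_one
    omega

namespace MG

section

variable {G : MG} (e₀ : G.E) (hloop : G.tgt e₀ ≠ G.src e₀)
  (huniq : ∀ e, G.src e = G.src e₀ → e = e₀)

open Classical in
noncomputable def contractVertex (w : G.V) : {w // w ≠ G.src e₀} :=
  if h : w = G.src e₀ then ⟨G.tgt e₀, hloop⟩ else ⟨w, h⟩

lemma contractVertex_of_ne {w : G.V} (hw : w ≠ G.src e₀) :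
    contractVertex e₀ hloop w = ⟨w, hw⟩ :=
  dif_neg hw

lemma contractVertex_src : contractVertex e₀ hloop (G.src e₀) = ⟨G.tgt e₀, hloop⟩ :=
  dif_pos rfl

open Classical in
noncomputable def contract : MG where
  V := {w // w ≠ G.src e₀}
  E := {e // e ≠ e₀}
  src e := ⟨G.src e, fun h => e.2 (huniq e h)⟩
  tgt e := contractVertex e₀ hloop (G.tgt e)

lemma isContraction_contract : IsContraction G (contract e₀ hloop huniq) := by
  refine ⟨_, _, e₀, hloop, rfl, rfl, huniq, Equiv.refl _, Equiv.refl _, fun _ => rfl, fun e => ?_⟩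
  by_cases h : G.tgt e.1 = G.src e₀
  · refine .inl ⟨h, ?_⟩
    show (contractVertex e₀ hloop (G.tgt e.1)).val = _
    rw [h, contractVertex_src]
  · refine .inr ⟨h, ?_⟩
    show (contractVertex e₀ hloop (G.tgt e.1)).val = _
    rw [contractVertex_of_ne e₀ hloop h]
    rfl

lemma outdeg_contract {w : G.V} (hw : w ≠ G.src e₀) :
    (contract e₀ hloop huniq).outdeg ⟨w, hw⟩ = G.outdeg w := by
  show Set.ncard {e : {e // e ≠ e₀} |
    (⟨G.src e, fun h => e.2 (huniq e h)⟩ : {w // w ≠ G.src e₀}) = ⟨w, hw⟩} = G.outdeg w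
  rw [outdeg, ← Set.ncard_image_of_injective _ Subtype.val_injective]
  congr 1
  ext e
  refine ⟨?_, fun he => ⟨⟨e, fun h => hw (by rw [← he, h])⟩, Subtype.ext he, rfl⟩⟩
  rintro ⟨e', he', rfl⟩
  exact congrArg Subtype.val he'

lemma reach_contract {a b : G.V} (h : G.Reach a b) :
    (contract e₀ hloop huniq).Reach (contractVertex e₀ hloop a) (contractVertex e₀ hloop b) := by
  refine ReflTransGen.lift' _ (fun c d ⟨e, hc, hd⟩ => ?_) _ _ h
  subst hc hd
  dsimp only [Function.onFun]
  by_cases he : e = e₀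
  · subst he
    rw [contractVertex_src, contractVertex_of_ne e hloop hloop]
    exact .refl
  · refine .single ⟨⟨e, he⟩, ?_, rfl⟩
    exact (contractVertex_of_ne e₀ hloop fun h => he (huniq e h)).symm

end

section

variable {G : MG} {e₀ : G.E} {hloop : G.tgt e₀ ≠ G.src e₀}
  {huniq : ∀ e, G.src e = G.src e₀ → e = e₀}

lemma one_le_outdeg_contract (h : ∀ w, 1 ≤ G.outdeg w) (w : (contract e₀ hloop huniq).V) :
    1 ≤ (contract e₀ hloop huniq).outdeg w :=
  outdeg_contract e₀ hloop huniq w.2 ▸ h w.1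

lemma NoSccOfOutdegOne.contract (h : G.NoSccOfOutdegOne) (hu : G.outdeg (G.src e₀) = 1) :
    (contract e₀ hloop huniq).NoSccOfOutdegOne := by
  intro w
  obtain ⟨x, hwx, hxw, hx⟩ := h w.1
  have hxu : x ≠ G.src e₀ := fun h => hx (h ▸ hu)
  have hw : contractVertex e₀ hloop w.1 = w := contractVertex_of_ne e₀ hloop w.2
  have hx' : contractVertex e₀ hloop x = ⟨x, hxu⟩ := contractVertex_of_ne e₀ hloop hxu
  refine ⟨⟨x, hxu⟩, ?_, ?_, by rwa [outdeg_contract]⟩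
  · simpa only [hw, hx'] using reach_contract e₀ hloop huniq hwx
  · simpa only [hw, hx'] using reach_contract e₀ hloop huniq hxw

end

theorem exists_reflTransGen_isContraction_two_le_outdeg (G : MG)
    (hpos : ∀ w, 1 ≤ G.outdeg w) (hscc : G.NoSccOfOutdegOne) :
    ∃ H, ReflTransGen IsContraction G H ∧ ∀ w, 2 ≤ H.outdeg w := by
  induction hn : Fintype.card G.V using Nat.strong_induction_on generalizing G with
  | _ n ih =>
  by_cases hone : ∃ u, G.outdeg u = 1
  · obtain ⟨u, hu⟩ := hone
    obtain ⟨e₀, rfl, huniq⟩ := G.outdeg_eq_one_iff.mp hu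
    have hloop : G.tgt e₀ ≠ G.src e₀ := fun hloop => by
      obtain ⟨x, hx, -, hx1⟩ := hscc (G.src e₀)
      exact hx1 (G.reach_eq_of_unique_loop huniq hloop hx ▸ hu)
    have hcontr := isContraction_contract e₀ hloop huniq
    have hcard := hcontr.card_V_add_one
    obtain ⟨H, hH, h2⟩ := ih _ (by omega) _ (one_le_outdeg_contract hpos)
      (hscc.contract hu) rfl
    exact ⟨H, hH.head hcontr, h2⟩
  · push Not at hone
    exact ⟨G, .refl, fun w => by have := hpos w; have := hone w; omega⟩

end MG

theorem stmt17 (G : MG)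
    (hscc2 : ∀ w : G.V, 2 ≤ Set.ncard {w' : G.V | G.Reach w w' ∧ G.Reach w' w})
    (hnotall1 : ∀ w : G.V, ∃ w', G.Reach w w' ∧ G.Reach w' w ∧ G.outdeg w' ≠ 1) :
    ∃ (n : ℕ) (seq : ℕ → MG), seq 0 = G ∧
      (∀ i < n, IsContraction (seq i) (seq (i + 1))) ∧
      2 * Fintype.card (seq n).V ≤ Fintype.card (seq n).E ∧
      Fintype.card (seq n).E - Fintype.card (seq n).V
        = Fintype.card G.E - Fintype.card G.V ∧
      Fintype.card (seq n).E ≤ 2 * (Fintype.card G.E - Fintype.card G.V) := by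
  have hpos : ∀ w, 1 ≤ G.outdeg w := fun w =>
    let ⟨_, hx, hxw⟩ := Set.exists_ne_of_one_lt_ncard (hscc2 w) w
    G.one_le_outdeg_of_reach hx.1 hxw
  obtain ⟨H, hGH, h2⟩ := G.exists_reflTransGen_isContraction_two_le_outdeg hpos hnotall1
  have hEV := card_E_sub_card_V_of_reflTransGen hGH
  have hH := H.two_mul_card_V_le_card_E h2
  obtain ⟨n, seq, h0, hstep, rfl⟩ := hGH.exists_seq
  exact ⟨n, seq, h0, hstep, hH, hEV, by omega⟩
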